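/- A set φ of UTVPI constraints is unsatisfiable in ℚ (i.e., no assignment v : X → ℚ satisfies a·v(x) + b·v(y) ≤ d for all constraints a·x + b·y ≤ d in φ) if and only if its constraint graph G_φ contains a negative weight cycle. -/

import Mathlib

/-!
A satisfying assignment `v` yields the potential `x⁺ ↦ v x`, `x⁻ ↦ -v x`, which no edge of
`G_φ` undercuts, so every cycle has nonnegative weight. Conversely, without negative cycles the
shortest-path distances form an integer potential `π`: only the finitely many non-loop edges
matter, and every path can be shortened to one without repeated vertices. Since `G_φ` is
invariant under `(u, w, d) ↦ (-w, -u, d)`, the assignment `x ↦ (π x⁺ - π x⁻) / 2` again gives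
a potential of the first kind, and each edge inequality of a constraint is equivalent to the
constraint itself.
-/

namespace UTVPIPaper

/-- A linear integer constraint `f ≤ bound`, where `f` is a finitely supported
integer linear form over the variables `X`. -/
structure UC (X : Type*) where
  f : X →₀ ℤ
  bound : ℤ

variable {X : Type*}

/-- `c` is a UTVPI constraint, i.e. of the form `a·x + b·y ≤ d` with `a, b ∈ {-1, 0, 1}`. -/
def UC.IsUTVPI (c : UC X) : Prop :=
  ∃ (a b : ℤ) (x y : X), (a = -1 ∨ a = 0 ∨ a = 1) ∧ (b = -1 ∨ b = 0 ∨ b = 1) ∧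
    c.f = Finsupp.single x a + Finsupp.single y b

/-- The constraint `c` holds under the integer assignment `v`. -/
def UC.holds (v : X → ℤ) (c : UC X) : Prop :=
  (c.f.sum fun x a => a * v x) ≤ c.bound

/-- The assignment `v` satisfies all constraints of `φ`. -/
def Sat (v : X → ℤ) (φ : Set (UC X)) : Prop := ∀ c ∈ φ, c.holds v

/-- `φ` is satisfiable in ℤ. -/
def SatZ (φ : Set (UC X)) : Prop := ∃ v : X → ℤ, Sat v φ

/-- The constraint `c` holds under the rational assignment `v`. -/
def UC.holdsQ (v : X → ℚ) (c : UC X) : Prop :=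
  (c.f.sum fun x a => (a : ℚ) * v x) ≤ (c.bound : ℚ)

/-- `φ` is satisfiable in ℚ. -/
def SatQ (φ : Set (UC X)) : Prop := ∃ v : X → ℚ, ∀ c ∈ φ, c.holdsQ v

/-- The transitive closure `TC(φ)`: the smallest set containing `φ` closed under
the rule: `a·x - c·y ≤ d₁` and `c·y + b·z ≤ d₂` imply `a·x + b·z ≤ d₁ + d₂`,
for `a, b ∈ {-1,0,1}` and `c ∈ {-1,1}`. -/
inductive TC (φ : Set (UC X)) : UC X → Prop
  | base {c : UC X} : c ∈ φ → TC φ c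
  | trans {a b c : ℤ} {x y z : X} {d₁ d₂ : ℤ} :
      (a = -1 ∨ a = 0 ∨ a = 1) → (b = -1 ∨ b = 0 ∨ b = 1) → (c = -1 ∨ c = 1) →
      TC φ ⟨Finsupp.single x a - Finsupp.single y c, d₁⟩ →
      TC φ ⟨Finsupp.single y c + Finsupp.single z b, d₂⟩ →
      TC φ ⟨Finsupp.single x a + Finsupp.single z b, d₁ + d₂⟩

/-- The tightened closure `TI(φ)`: the smallest set containing `φ` closed under
the rule: `a·x + a·x ≤ d` implies `a·x ≤ ⌊d/2⌋`, for `a ∈ {-1,1}`. -/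
inductive TI (φ : Set (UC X)) : UC X → Prop
  | base {c : UC X} : c ∈ φ → TI φ c
  | tighten {a : ℤ} {x : X} {d : ℤ} :
      (a = -1 ∨ a = 1) →
      TI φ ⟨Finsupp.single x a + Finsupp.single x a, d⟩ →
      TI φ ⟨Finsupp.single x a, Int.fdiv d 2⟩

/-- The tightened transitive closure `TTC(φ)`: the smallest set containing `φ`
closed under both the transitivity and the tightening rules. -/
inductive TTC (φ : Set (UC X)) : UC X → Prop
  | base {c : UC X} : c ∈ φ → TTC φ c
  | trans {a b c : ℤ} {x y z : X} {d₁ d₂ : ℤ} :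
      (a = -1 ∨ a = 0 ∨ a = 1) → (b = -1 ∨ b = 0 ∨ b = 1) → (c = -1 ∨ c = 1) →
      TTC φ ⟨Finsupp.single x a - Finsupp.single y c, d₁⟩ →
      TTC φ ⟨Finsupp.single y c + Finsupp.single z b, d₂⟩ →
      TTC φ ⟨Finsupp.single x a + Finsupp.single z b, d₁ + d₂⟩
  | tighten {a : ℤ} {x : X} {d : ℤ} :
      (a = -1 ∨ a = 1) →
      TTC φ ⟨Finsupp.single x a + Finsupp.single x a, d⟩ →
      TTC φ ⟨Finsupp.single x a, Int.fdiv d 2⟩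

/-- Vertices of the constraint graph: `(true, x)` is `x⁺` and `(false, x)` is `x⁻`. -/
abbrev Vtx (X : Type*) := Bool × X

/-- The counterpart `-u` of a vertex `u`. -/
def vneg (u : Vtx X) : Vtx X := (!u.1, u.2)

/-- The set of edges `E(c)` associated with a UTVPI constraint `c`
(the transformation table):
`x - y ≤ d` gives `(y⁺, x⁺, d)` and `(x⁻, y⁻, d)`;
`x + y ≤ d` gives `(y⁻, x⁺, d)` and `(x⁻, y⁺, d)`;
`-x - y ≤ d` gives `(y⁺, x⁻, d)` and `(x⁺, y⁻, d)`;
`x ≤ d` gives `(x⁻, x⁺, 2d)`; `-x ≤ d` gives `(x⁺, x⁻, 2d)`. -/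
def cedges (c : UC X) : Set (Vtx X × Vtx X × ℤ) :=
  { e | ∃ (x y : X) (d : ℤ),
      (c = ⟨Finsupp.single x 1 - Finsupp.single y 1, d⟩ ∧
        (e = ((true, y), (true, x), d) ∨ e = ((false, x), (false, y), d))) ∨
      (c = ⟨Finsupp.single x 1 + Finsupp.single y 1, d⟩ ∧
        (e = ((false, y), (true, x), d) ∨ e = ((false, x), (true, y), d))) ∨
      (c = ⟨-Finsupp.single x 1 - Finsupp.single y 1, d⟩ ∧
        (e = ((true, y), (false, x), d) ∨ e = ((true, x), (false, y), d))) ∨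
      (c = ⟨Finsupp.single x 1, d⟩ ∧ e = ((false, x), (true, x), 2 * d)) ∨
      (c = ⟨-Finsupp.single x 1, d⟩ ∧ e = ((true, x), (false, x), 2 * d)) }

/-- The constraint graph `G_φ` of a set `φ` of UTVPI constraints. -/
def Gr (φ : Set (UC X)) : Set (Vtx X × Vtx X × ℤ) := { e | ∃ c ∈ φ, e ∈ cedges c }

/-- `IsPath E u p v`: `p` is a path (a sequence of consecutive weighted edges,
each belonging to the edge set `E`) from vertex `u` to vertex `v`. -/
inductive IsPath {V : Type*} (E : Set (V × V × ℤ)) : V → List (V × V × ℤ) → V → Prop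
  | nil (v : V) : IsPath E v [] v
  | cons {u v w : V} {d : ℤ} {p : List (V × V × ℤ)} :
      (u, v, d) ∈ E → IsPath E v p w → IsPath E u ((u, v, d) :: p) w

/-- The weight of a path: the sum of the weights of its edges. -/
def pweight {V : Type*} (p : List (V × V × ℤ)) : ℤ := (p.map fun e => e.2.2).sum

/-- The graph `E` has no negative weight cycle. -/
def NoNegCycle {V : Type*} (E : Set (V × V × ℤ)) : Prop :=
  ∀ (v : V) (p : List (V × V × ℤ)), IsPath E v p v → 0 ≤ pweight p

/-- `wSP E u v` is the minimum weight of a path from `u` to `v` in `E`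
(`⊤` if no path exists). -/
noncomputable def wSP {V : Type*} (E : Set (V × V × ℤ)) (u v : V) : WithTop ℤ :=
  sInf {w : WithTop ℤ | ∃ p, IsPath E u p v ∧ (pweight p : WithTop ℤ) = w}

/-- The bounds function `ρ(u) = ⌊wSP(u, -u) / 2⌋` (`⊤` if there is no path from `u` to `-u`). -/
noncomputable def rho (φ : Set (UC X)) (u : Vtx X) : WithTop ℤ :=
  (wSP (Gr φ) u (vneg u)).map fun w => Int.fdiv w 2

section Paths

variable {V : Type*} {E : Set (V × V × ℤ)} {u v w : V} {p q : List (V × V × ℤ)}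

def IsPotential {R : Type*} [IntCast R] [Add R] [LE R] (E : Set (V × V × ℤ)) (ψ : V → R) :
    Prop :=
  ∀ e ∈ E, ψ e.2.1 ≤ ψ e.1 + e.2.2

@[simp]
lemma pweight_nil : pweight ([] : List (V × V × ℤ)) = 0 := rfl

@[simp]
lemma pweight_cons (e : V × V × ℤ) (p : List (V × V × ℤ)) :
    pweight (e :: p) = e.2.2 + pweight p := by simp [pweight]

@[simp]
lemma pweight_append (p q : List (V × V × ℤ)) : pweight (p ++ q) = pweight p + pweight q := by
  simp [pweight]

lemma isPath_cons_iff {e : V × V × ℤ} :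
    IsPath E u (e :: p) w ↔ e.1 = u ∧ e ∈ E ∧ IsPath E e.2.1 p w := by
  obtain ⟨a, b, d⟩ := e
  constructor
  · rintro (_ | ⟨he, hp⟩)
    exact ⟨rfl, he, hp⟩
  · rintro ⟨rfl, he, hp⟩
    exact .cons he hp

lemma isPath_append_iff : IsPath E u (p ++ q) w ↔ ∃ v, IsPath E u p v ∧ IsPath E v q w := by
  induction p generalizing u with
  | nil => exact ⟨fun h => ⟨u, .nil u, h⟩, fun ⟨v, hp, hq⟩ => by cases hp; exact hq⟩
  | cons e p ih =>
    simp only [List.cons_append, isPath_cons_iff, ih]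
    exact ⟨fun ⟨hu, he, v, hp, hq⟩ => ⟨v, ⟨hu, he, hp⟩, hq⟩,
      fun ⟨v, ⟨hu, he, hp⟩, hq⟩ => ⟨hu, he, v, hp, hq⟩⟩

lemma IsPath.append (hp : IsPath E u p v) (hq : IsPath E v q w) : IsPath E u (p ++ q) w :=
  isPath_append_iff.2 ⟨v, hp, hq⟩

lemma IsPath.mem (hp : IsPath E u p v) {e : V × V × ℤ} (he : e ∈ p) : e ∈ E := by
  induction hp with
  | nil => simp at he
  | cons he' _ ih =>
    rcases List.mem_cons.1 he with rfl | he
    exacts [he', ih he]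

lemma IsPath.mono {E' : Set (V × V × ℤ)} (hEE' : E ⊆ E') (hp : IsPath E u p v) :
    IsPath E' u p v := by
  induction hp with
  | nil => exact .nil _
  | cons he _ ih => exact .cons (hEE' he) ih

lemma IsPath.le_add_pweight {R : Type*} [AddCommGroupWithOne R] [PartialOrder R]
    [IsOrderedAddMonoid R] {ψ : V → R} (hψ : IsPotential E ψ) (hp : IsPath E u p v) :
    ψ v ≤ ψ u + pweight p := by
  induction hp with
  | nil => simp
  | @cons a b _ d p he _ ih =>
    calc ψ _ ≤ ψ b + pweight p := ih
      _ ≤ ψ a + d + pweight p := add_le_add_left (hψ _ he) _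
      _ = ψ a + pweight ((a, b, d) :: p) := by rw [pweight_cons, Int.cast_add, add_assoc]

lemma IsPotential.noNegCycle {ψ : V → ℚ} (hψ : IsPotential E ψ) : NoNegCycle E := by
  intro v p hp
  exact_mod_cast le_add_iff_nonneg_right _ |>.1 (hp.le_add_pweight hψ)

lemma _root_.List.exists_eq_append_cons_append_cons_of_not_nodup_map {α β : Type*} (f : α → β)
    {l : List α} (h : ¬ (l.map f).Nodup) :
    ∃ (A B C : List α) (a b : α), l = A ++ a :: (B ++ b :: C) ∧ f a = f b := by
  induction l with
  | nil => simp at h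
  | cons x xs ih =>
    rw [List.map_cons, List.nodup_cons, not_and_or, not_not] at h
    rcases h with hx | hxs
    · obtain ⟨b, hb, hfb⟩ := List.mem_map.1 hx
      obtain ⟨B, C, rfl⟩ := List.append_of_mem hb
      exact ⟨[], B, C, x, b, rfl, hfb.symm⟩
    · obtain ⟨A, B, C, a, b, rfl, hab⟩ := ih hxs
      exact ⟨x :: A, B, C, a, b, rfl, hab⟩

/-- A path with more edges than there are edge sources revisits a vertex; cutting out the cycle
in between does not increase the weight. -/
lemma IsPath.exists_shorter (hnc : NoNegCycle E) {S : Finset V} (hS : ∀ e ∈ E, e.1 ∈ S)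
    (hp : IsPath E u p v) (hlen : S.card < p.length) :
    ∃ q, IsPath E u q v ∧ q.length < p.length ∧ pweight q ≤ pweight p := by
  classical
  have hdup : ¬ (p.map Prod.fst).Nodup := fun hnd => by
    have := hnd.length_le_of_subset (l₂ := S.toList) fun s hs => by
      obtain ⟨e, he, rfl⟩ := List.mem_map.1 hs
      exact Finset.mem_toList.2 (hS e (hp.mem he))
    simp only [List.length_map, Finset.length_toList] at this
    omega
  obtain ⟨A, B, C, a, b, rfl, hab⟩ :=
    List.exists_eq_append_cons_append_cons_of_not_nodup_map Prod.fst hdup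
  obtain ⟨s, hA, rfl, ha, t, hB, rfl, hb, hC⟩ := by
    simpa only [isPath_append_iff, isPath_cons_iff] using hp
  have hcycle : 0 ≤ pweight (a :: B) := hnc _ _ (isPath_cons_iff.2 ⟨rfl, ha, hab ▸ hB⟩)
  refine ⟨A ++ b :: C, hA.append (isPath_cons_iff.2 ⟨hab.symm, hb, hC⟩), by simp, ?_⟩
  simp only [pweight_append, pweight_cons] at hcycle ⊢
  linarith

lemma IsPath.exists_length_le (hnc : NoNegCycle E) {S : Finset V} (hS : ∀ e ∈ E, e.1 ∈ S)
    (hp : IsPath E u p v) : ∃ q, IsPath E u q v ∧ q.length ≤ S.card ∧ pweight q ≤ pweight p := by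
  induction hn : p.length using Nat.strong_induction_on generalizing p with
  | _ n ih =>
    by_cases hlen : p.length ≤ S.card
    · exact ⟨p, hp, hlen, le_rfl⟩
    obtain ⟨q, hq, hqlen, hqw⟩ := hp.exists_shorter hnc hS (by omega)
    obtain ⟨r, hr, hrlen, hrw⟩ := ih _ (hn ▸ hqlen) hq rfl
    exact ⟨r, hr, hrlen, hrw.trans hqw⟩

end Paths

section Potential

variable {V : Type*} {E : Set (V × V × ℤ)}

/-- The potential is the shortest-path distance from an imagined source joined to every
vertex by a zero-weight edge; short paths make it bounded below. -/
lemma exists_isPotential_of_finite (hfin : E.Finite) (hnc : NoNegCycle E) :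
    ∃ π : V → ℤ, IsPotential E π := by
  classical
  let S : Finset V := hfin.toFinset.image Prod.fst
  have hS : ∀ e ∈ E, e.1 ∈ S := fun e he => Finset.mem_image_of_mem _ (hfin.mem_toFinset.2 he)
  obtain ⟨m, hm⟩ := (hfin.image fun e => e.2.2).bddBelow
  let weights (v : V) : Set ℤ := {w | ∃ u p, IsPath E u p v ∧ pweight p = w}
  have hne (v : V) : (weights v).Nonempty := ⟨0, v, [], .nil v, rfl⟩
  have hbdd (v : V) : BddBelow (weights v) := by
    refine ⟨S.card • min m 0, ?_⟩
    rintro _ ⟨u, p, hp, rfl⟩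
    obtain ⟨q, hq, hqlen, hqw⟩ := hp.exists_length_le hnc hS
    have hedge : ∀ d ∈ q.map fun e => e.2.2, min m 0 ≤ d := by
      simp only [List.mem_map]
      rintro _ ⟨e, he, rfl⟩
      exact min_le_of_left_le (hm ⟨e, hq.mem he, rfl⟩)
    calc S.card • min m 0 ≤ q.length • min m 0 := nsmul_le_nsmul_left_of_nonpos (by simp) hqlen
      _ ≤ pweight q := by simpa [pweight] using List.card_nsmul_le_sum _ _ hedge
      _ ≤ pweight p := hqw
  refine ⟨fun v => sInf (weights v), fun ⟨a, b, d⟩ he => ?_⟩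
  have : sInf (weights b) - d ≤ sInf (weights a) := le_csInf (hne a) fun _ ⟨u, p, hp, hw⟩ => by
    have := csInf_le (hbdd b) ⟨u, p ++ [(a, b, d)], hp.append (.cons he (.nil b)), rfl⟩
    simp only [pweight_append, pweight_cons, pweight_nil] at this
    omega
  simp only [Int.cast_id]
  omega

lemma exists_isPotential_of_finite_nonloop (hfin : {e ∈ E | e.1 ≠ e.2.1}.Finite)
    (hnc : NoNegCycle E) : ∃ π : V → ℤ, IsPotential E π := by
  obtain ⟨π, hπ⟩ := exists_isPotential_of_finite hfin fun v p hp => hnc v p (hp.mono fun _ h => h.1)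
  refine ⟨π, fun ⟨a, b, d⟩ he => ?_⟩
  by_cases hloop : a = b
  · subst hloop
    have := hnc _ _ (.cons he (.nil a))
    simp only [pweight_cons, pweight_nil, add_zero, Int.cast_id] at this ⊢
    omega
  · exact hπ _ ⟨he, hloop⟩

end Potential

section Constraints

variable {X : Type*}

def signedVal (v : X → ℚ) (u : Vtx X) : ℚ := if u.1 then v u.2 else -v u.2

lemma UC.holdsQ_iff_linearCombination (c : UC X) (v : X → ℚ) :
    c.holdsQ v ↔ Finsupp.linearCombination ℤ v c.f ≤ c.bound := by
  simp [UC.holdsQ, Finsupp.linearCombination_apply, zsmul_eq_mul]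

lemma holdsQ_iff_of_mem_cedges {c : UC X} {e : Vtx X × Vtx X × ℤ} (he : e ∈ cedges c)
    (v : X → ℚ) : c.holdsQ v ↔ signedVal v e.2.1 ≤ signedVal v e.1 + e.2.2 := by
  obtain ⟨x, y, d, h⟩ := he
  rcases h with ⟨rfl, rfl | rfl⟩ | ⟨rfl, rfl | rfl⟩ | ⟨rfl, rfl | rfl⟩ | ⟨rfl, rfl⟩ | ⟨rfl, rfl⟩ <;>
  simp only [UC.holdsQ_iff_linearCombination, map_add, map_sub, map_neg,
    Finsupp.linearCombination_single, one_smul, signedVal, Bool.false_eq_true, ↓reduceIte,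
    Int.cast_mul, Int.cast_ofNat] <;>
  constructor <;> intro <;> linarith

lemma swap_vneg_mem_cedges {c : UC X} {e : Vtx X × Vtx X × ℤ} (he : e ∈ cedges c) :
    (vneg e.2.1, vneg e.1, e.2.2) ∈ cedges c := by
  obtain ⟨x, y, d, h⟩ := he
  refine ⟨x, y, d, ?_⟩
  rcases h with ⟨rfl, rfl | rfl⟩ | ⟨rfl, rfl | rfl⟩ | ⟨rfl, rfl | rfl⟩ | ⟨rfl, rfl⟩ | ⟨rfl, rfl⟩ <;>
  simp [vneg]

lemma UC.IsUTVPI.cedges_nonempty {c : UC X} (hc : c.IsUTVPI) : (cedges c).Nonempty := by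
  obtain ⟨a, b, x, y, ha, hb, hf⟩ := hc
  obtain ⟨f, d⟩ := c
  obtain rfl : f = _ := hf
  rcases ha with rfl | rfl | rfl <;> rcases hb with rfl | rfl | rfl
  · exact ⟨_, x, y, d, .inr <| .inr <| .inl ⟨by simp [sub_eq_add_neg], .inl rfl⟩⟩
  · exact ⟨_, x, y, d, .inr <| .inr <| .inr <| .inr ⟨by simp, rfl⟩⟩
  · exact ⟨_, y, x, d, .inl ⟨by simp [sub_eq_add_neg, add_comm], .inl rfl⟩⟩
  · exact ⟨_, y, x, d, .inr <| .inr <| .inr <| .inr ⟨by simp, rfl⟩⟩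
  · exact ⟨_, x, x, d, .inl ⟨by simp, .inl rfl⟩⟩
  · exact ⟨_, y, x, d, .inr <| .inr <| .inr <| .inl ⟨by simp, rfl⟩⟩
  · exact ⟨_, x, y, d, .inl ⟨by simp [sub_eq_add_neg], .inl rfl⟩⟩
  · exact ⟨_, x, y, d, .inr <| .inr <| .inr <| .inl ⟨by simp, rfl⟩⟩
  · exact ⟨_, x, y, d, .inr <| .inl ⟨rfl, .inl rfl⟩⟩

/-- This makes the non-loop part of `G_φ` finite, whereas a constraint `0 ≤ d` has a loop at
every vertex. -/
lemma mem_support_of_mem_cedges {c : UC X} {e : Vtx X × Vtx X × ℤ} (he : e ∈ cedges c)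
    (hne : e.1 ≠ e.2.1) :
    e.1.2 ∈ c.f.support ∧ e.2.1.2 ∈ c.f.support ∧ (e.2.2 = c.bound ∨ e.2.2 = 2 * c.bound) := by
  classical
  obtain ⟨x, y, d, h⟩ := he
  rcases h with ⟨rfl, rfl | rfl⟩ | ⟨rfl, rfl | rfl⟩ | ⟨rfl, rfl | rfl⟩ | ⟨rfl, rfl⟩ | ⟨rfl, rfl⟩ <;>
  refine ⟨?_, ?_, by simp⟩ <;>
  simp only [Finsupp.mem_support_iff, Finsupp.coe_add, Finsupp.coe_sub, Finsupp.coe_neg,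
    Pi.add_apply, Pi.sub_apply, Pi.neg_apply, Finsupp.single_apply] <;> grind

lemma finite_nonloop_Gr {φ : Set (UC X)} (hfin : φ.Finite) :
    {e ∈ Gr φ | e.1 ≠ e.2.1}.Finite := by
  let vertices (c : UC X) : Set (Vtx X) := Set.univ ×ˢ c.f.support
  have hvertices (c : UC X) : (vertices c).Finite :=
    Set.finite_univ.prod c.f.support.finite_toSet
  refine (hfin.biUnion fun c _ => (hvertices c).prod ((hvertices c).prod
    (Set.toFinite {c.bound, 2 * c.bound}))).subset ?_
  rintro e ⟨⟨c, hc, he⟩, hne⟩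
  obtain ⟨h₁, h₂, h₃⟩ := mem_support_of_mem_cedges he hne
  exact Set.mem_biUnion hc ⟨⟨trivial, h₁⟩, ⟨trivial, h₂⟩, h₃⟩

lemma isPotential_signedVal {φ : Set (UC X)} {v : X → ℚ} (hv : ∀ c ∈ φ, c.holdsQ v) :
    IsPotential (Gr φ) (signedVal v) := fun _ ⟨c, hc, he⟩ =>
  (holdsQ_iff_of_mem_cedges he v).1 (hv c hc)

/-- `G_φ` is invariant under `(u, w, d) ↦ (-w, -u, d)`, so averaging `π` with its mirror image
`u ↦ -π (-u)` keeps it a potential. -/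
lemma isPotential_signedVal_of_isPotential {φ : Set (UC X)} {π : Vtx X → ℤ}
    (hπ : IsPotential (Gr φ) π) :
    IsPotential (Gr φ) (signedVal fun x => ((π (true, x) : ℚ) - π (false, x)) / 2) := by
  rintro ⟨u, w, d⟩ ⟨c, hc, he⟩
  have h₁ : π w ≤ π u + d := hπ _ ⟨c, hc, he⟩
  have h₂ : π (vneg u) ≤ π (vneg w) + d := hπ _ ⟨c, hc, swap_vneg_mem_cedges he⟩
  obtain ⟨_ | _, x⟩ := u <;> obtain ⟨_ | _, y⟩ := w <;>
  simp only [vneg, signedVal, Bool.not_true, Bool.not_false, Bool.false_eq_true, ↓reduceIte]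
    at h₁ h₂ ⊢ <;>
  · qify at h₁ h₂
    linarith

theorem satQ_iff_noNegCycle {φ : Set (UC X)} (hwf : ∀ c ∈ φ, c.IsUTVPI) (hfin : φ.Finite) :
    SatQ φ ↔ NoNegCycle (Gr φ) := by
  refine ⟨fun ⟨v, hv⟩ => (isPotential_signedVal hv).noNegCycle, fun hnc => ?_⟩
  obtain ⟨π, hπ⟩ := exists_isPotential_of_finite_nonloop (finite_nonloop_Gr hfin) hnc
  refine ⟨fun x => ((π (true, x) : ℚ) - π (false, x)) / 2, fun c hc => ?_⟩
  obtain ⟨e, he⟩ := (hwf c hc).cedges_nonempty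
  exact (holdsQ_iff_of_mem_cedges he _).2 (isPotential_signedVal_of_isPotential hπ e ⟨c, hc, he⟩)

end Constraints

/-- A (finite) set `φ` of UTVPI constraints is unsatisfiable in ℚ
iff its constraint graph `G_φ` contains a negative weight cycle. -/
theorem utvpi_unsatQ_iff_negative_cycle {X : Type*}
    (φ : Set (UC X)) (hwf : ∀ c ∈ φ, c.IsUTVPI) (hfin : φ.Finite) :
    ¬ SatQ φ ↔
      ∃ (u : Vtx X) (p : List (Vtx X × Vtx X × ℤ)),
        IsPath (Gr φ) u p u ∧ pweight p < 0 := by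
  simp only [satQ_iff_noNegCycle hwf hfin, NoNegCycle, not_forall, not_le, exists_prop]

end UTVPIPaper
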